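/- arXiv:2604.07478 — 2 statements merged into one kernel-verified Lean document; each statement's English description precedes it below -/
import Mathlib

section
/- For every n ≥ 3, d ≥ 2, and every time t ≥ 0, the worst-case total variation distance of the RWBD chain to stationarity is attained at state 0: max_{x ∈ {0,…,d}} ‖P*^t(x,·) − π*‖_TV = ‖P*^t(0,·) − π*‖_TV. -/
open Finset

noncomputable section

/-- Total variation distance between two distributions on a finite set. -/
def tv {S : Type*} [Fintype S] (μ ν : S → ℝ) : ℝ :=
  (∑ s, |μ s - ν s|) / 2

/-- The transition matrix of the Rook's Walk Birth-Death (RWBD) chain on `{0,…,d}`. -/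
def BD.P (n d : ℕ) : Matrix (Fin (d + 1)) (Fin (d + 1)) ℝ :=
  Matrix.of fun x y =>
    if (y : ℕ) + 1 = (x : ℕ) then (x : ℝ) / ((d : ℝ) * ((n : ℝ) - 1))
    else if (y : ℕ) = (x : ℕ) then (x : ℝ) * ((n : ℝ) - 2) / ((d : ℝ) * ((n : ℝ) - 1))
    else if (y : ℕ) = (x : ℕ) + 1 then ((d : ℝ) - (x : ℝ)) / (d : ℝ)
    else 0

/-- The stationary distribution of the RWBD chain: `π*(x) = C(d,x)(n-1)^x n^{-d}`. -/
def BD.pi (n d : ℕ) : Fin (d + 1) → ℝ :=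
  fun x => (d.choose (x : ℕ) : ℝ) * ((n : ℝ) - 1) ^ (x : ℕ) / (n : ℝ) ^ d

/-- Worst-case total variation distance to stationarity of the RWBD chain at time `t`. -/
def BD.dist (n d : ℕ) (t : ℕ) : ℝ :=
  ⨆ x : Fin (d + 1), tv ((BD.P n d ^ t) x) (BD.pi n d)

/-- The mixing time of the RWBD chain. -/
def BD.tmix (n d : ℕ) (ε : ℝ) : ℕ := sInf {t : ℕ | BD.dist n d t ≤ ε}

/-!
The RWBD chain is the rook's walk `Q` on `Fin d → Fin n` (jump to a uniform vertex at Hamming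
distance one) lumped by the Hamming distance to a fixed vertex `w`: started at `v`, the distance to
`w` runs the RWBD chain from `d(v, w)`, and the uniform distribution lumps to `π*`. Lumping can
only decrease total variation, so `‖P*^t(x, ·) - π*‖ ≤ ‖Q^t(v, ·) - unif‖` whenever `d(v, w) = x`.
For `w = v` this is an equality: `Q` is symmetric, so `Q^t(v, u) = Q^t(u, v) = P*^t(d(u, v), 0)`
only depends on the fibre of `u`, and lumping a density constant on fibres preserves total
variation.
-/

open Function Matrix

section Lumping

variable {S T : Type*} [DecidableEq T]

/-- `μ ᵥ* lumpMatrix f` is the pushforward of `μ` along `f`, and `Q * lumpMatrix f =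
lumpMatrix f * P` is Dynkin's criterion for `f` to lump the chain `Q` into the chain `P`. -/
def lumpMatrix (f : S → T) : Matrix S T ℝ := Matrix.of fun s z => if f s = z then 1 else 0

variable {f : S → T}

lemma vecMul_lumpMatrix_apply [Fintype S] (μ : S → ℝ) (z : T) :
    (μ ᵥ* lumpMatrix f) z = ∑ s with f s = z, μ s := by
  simp [lumpMatrix, Matrix.vecMul, dotProduct, sum_filter]

lemma lumpMatrix_mul_apply [Fintype T] (P : Matrix T T ℝ) (s : S) (z : T) :
    (lumpMatrix f * P) s z = P (f s) z := by
  simp [lumpMatrix, Matrix.mul_apply]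

lemma pow_mul_lumpMatrix [Fintype S] [DecidableEq S] [Fintype T]
    {Q : Matrix S S ℝ} {P : Matrix T T ℝ} (h : Q * lumpMatrix f = lumpMatrix f * P) (t : ℕ) :
    Q ^ t * lumpMatrix f = lumpMatrix f * P ^ t := by
  induction t with
  | zero => simp
  | succ t ih =>
    rw [pow_succ, Matrix.mul_assoc, h, ← Matrix.mul_assoc, ih, Matrix.mul_assoc, pow_succ]

lemma tv_vecMul_lumpMatrix_le [Fintype S] [Fintype T] (μ ν : S → ℝ) :
    tv (μ ᵥ* lumpMatrix f) (ν ᵥ* lumpMatrix f) ≤ tv μ ν := by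
  unfold tv
  gcongr
  calc ∑ z, |(μ ᵥ* lumpMatrix f) z - (ν ᵥ* lumpMatrix f) z|
      = ∑ z, |∑ s with f s = z, (μ s - ν s)| := by
        simp only [vecMul_lumpMatrix_apply, sum_sub_distrib]
    _ ≤ ∑ z, ∑ s with f s = z, |μ s - ν s| := by gcongr; exact abs_sum_le_sum_abs _ _
    _ = ∑ s, |μ s - ν s| := sum_fiberwise _ _ _

lemma tv_vecMul_lumpMatrix_comp [Fintype S] [Fintype T] (g h : T → ℝ) :
    tv ((g ∘ f) ᵥ* lumpMatrix f) ((h ∘ f) ᵥ* lumpMatrix f) = tv (g ∘ f) (h ∘ f) := by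
  unfold tv
  congr 1
  calc ∑ z, |((g ∘ f) ᵥ* lumpMatrix f) z - ((h ∘ f) ᵥ* lumpMatrix f) z|
      = ∑ z, ∑ s with f s = z, |g z - h z| := by
        refine sum_congr rfl fun z _ => ?_
        simp only [vecMul_lumpMatrix_apply, ← sum_sub_distrib]
        rw [sum_congr rfl fun s hs => by
            rw [Function.comp_apply, Function.comp_apply, (mem_filter.1 hs).2],
          sum_const, sum_const, abs_nsmul]
    _ = ∑ s, |(g ∘ f) s - (h ∘ f) s| := sum_fiberwise' _ _ (fun z => |g z - h z|)

end Lumping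

section Hamming

variable {ι : Type*} [Fintype ι] [DecidableEq ι] {β : ι → Type*} [∀ i, DecidableEq (β i)]

lemma hammingDist_update (u w : ∀ i, β i) (i : ι) (a : β i) :
    hammingDist (update u i a) w = hammingDist (update u i (w i)) w + if a = w i then 0 else 1 := by
  simp only [hammingDist, card_filter, ← add_sum_erase _ _ (mem_univ i), update_self, ne_eq,
    ite_not, if_true, zero_add]
  rw [add_comm]
  congr 1
  refine sum_congr rfl fun j hj => ?_
  rw [update_of_ne (ne_of_mem_erase hj), update_of_ne (ne_of_mem_erase hj)]

lemma sum_hammingDist_eq_one {M : Type*} [AddCommMonoid M] [∀ i, Fintype (β i)]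
    (u : ∀ i, β i) (g : (∀ i, β i) → M) :
    ∑ u' with hammingDist u u' = 1, g u' = ∑ i, ∑ a ∈ univ.erase (u i), g (update u i a) := by
  rw [sum_sigma']
  refine (sum_bij (fun p _ => update u p.1 p.2) ?_ ?_ ?_ fun _ _ => rfl).symm
  · rintro ⟨i, a⟩ hp
    have ha : a ≠ u i := ne_of_mem_erase (mem_sigma.1 hp).2
    have := hammingDist_update u u i a
    rw [update_eq_self, hammingDist_self, if_neg ha] at this
    simpa [hammingDist_comm] using this
  · rintro ⟨i, a⟩ hp ⟨j, b⟩ hq heq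
    have ha : a ≠ u i := ne_of_mem_erase (mem_sigma.1 hp).2
    obtain rfl : i = j := by
      by_contra hij
      have := congrFun heq i
      rw [update_self, update_of_ne hij] at this
      exact ha this
    exact congrArg _ (update_injective u i heq)
  · intro u' hu'
    obtain ⟨i, hi⟩ := card_eq_one.1 (mem_filter.1 hu').2
    have hdiff : ∀ j, u j ≠ u' j ↔ j = i := fun j => by
      simpa using congrArg (j ∈ ·) hi
    refine ⟨⟨i, u' i⟩,
      mem_sigma.2 ⟨mem_univ _, mem_erase.2 ⟨((hdiff i).2 rfl).symm, mem_univ _⟩⟩, ?_⟩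
    funext j
    by_cases hj : j = i
    · subst hj; simp
    · simpa [update_of_ne hj] using mt (hdiff j).1 hj

end Hamming

lemma card_filter_eq_add_hammingDist {ι α : Type*} [Fintype ι] [DecidableEq α] (u w : ι → α) :
    #{i | u i = w i} + hammingDist u w = Fintype.card ι :=
  card_filter_add_card_filter_not _

open Polynomial in
lemma card_hammingDist_eq {ι α : Type*} [Fintype ι] [DecidableEq ι] [Fintype α] [DecidableEq α]
    (w : ι → α) {k : ℕ} (hk : k ≤ Fintype.card ι) :
    #{u | hammingDist u w = k} = (Fintype.card ι).choose k * (Fintype.card α - 1) ^ k := by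
  -- `∑ u, X ^ #{i | u i = w i}` factors over the coordinates.
  have hgen : ∑ u : ι → α, (X : ℕ[X]) ^ #{i | u i = w i} =
      (X + C (Fintype.card α - 1)) ^ Fintype.card ι := by
    have hcoord : ∀ i, ∑ a, (if a = w i then X else 1 : ℕ[X]) = X + C (Fintype.card α - 1) := by
      intro i
      rw [← add_sum_erase _ _ (mem_univ (w i)), if_pos rfl,
        sum_congr rfl fun a ha => if_neg (ne_of_mem_erase ha), sum_const,
        card_erase_of_mem (mem_univ _), card_univ, nsmul_one]
      simp
    rw [← card_univ (α := ι), ← prod_const, ← prod_congr rfl fun i _ => hcoord i, prod_univ_sum,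
      Fintype.piFinset_univ]
    refine sum_congr rfl fun u _ => ?_
    rw [prod_ite, prod_const, prod_const_one, mul_one]
  have hagree : ∀ u : ι → α, #{i | u i = w i} = Fintype.card ι - hammingDist u w := fun u => by
    have := card_filter_eq_add_hammingDist u w
    omega
  have := congrArg (coeff · (Fintype.card ι - k)) hgen
  simp only [finsetSum_coeff, coeff_X_pow, coeff_X_add_C_pow, Nat.sub_sub_self hk,
    Nat.choose_symm hk, hagree, Nat.cast_id] at this
  rw [card_filter, mul_comm, ← this]
  refine sum_congr rfl fun u _ => ?_
  have := hammingDist_le_card_fintype (x := u) (y := w)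
  congr 1
  apply propext
  omega

lemma sum_erase_hammingDist_update_eq {ι α : Type*} [Fintype ι] [DecidableEq ι] [Fintype α]
    [DecidableEq α] (u w : ι → α) (i : ι) (z : ℕ) :
    ∑ a ∈ univ.erase (u i), (if hammingDist (update u i a) w = z then (1 : ℝ) else 0) =
      if u i = w i then
        (Fintype.card α - 1 : ℝ) * if hammingDist u w + 1 = z then 1 else 0
      else
        (if z + 1 = hammingDist u w then 1 else 0) +
          (Fintype.card α - 2 : ℝ) * if hammingDist u w = z then 1 else 0 := by
  have hx := hammingDist_update u w i (u i)
  rw [update_eq_self] at hx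
  have hdist : ∀ a, a ≠ w i →
      hammingDist (update u i a) w = hammingDist (update u i (w i)) w + 1 := fun a ha => by
    rw [hammingDist_update, if_neg ha]
  by_cases hu : u i = w i
  · rw [if_pos hu, add_zero] at hx
    rw [if_pos hu, sum_congr rfl fun a ha => by rw [hdist a (hu ▸ ne_of_mem_erase ha), ← hx],
      sum_const, card_erase_of_mem (mem_univ _), card_univ, nsmul_eq_mul,
      Nat.cast_pred (Fintype.card_pos_iff.2 ⟨u i⟩)]
  · rw [if_neg hu] at hx
    have hw : w i ∈ univ.erase (u i) := mem_erase.2 ⟨Ne.symm hu, mem_univ _⟩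
    have hcard : #((univ.erase (u i)).erase (w i)) + 2 = Fintype.card α := by
      rw [card_erase_of_mem hw, card_erase_of_mem (mem_univ _), card_univ]
      have := Fintype.one_lt_card_iff.2 ⟨u i, w i, hu⟩
      omega
    rw [if_neg hu, ← add_sum_erase _ _ hw,
      sum_congr rfl fun a ha => by rw [hdist a (ne_of_mem_erase ha), ← hx],
      sum_const, nsmul_eq_mul, ← hcard]
    push_cast
    congr 1
    · congr 1
      apply propext
      omega
    · ring

namespace RookWalk

def Q (n d : ℕ) : Matrix (Fin d → Fin n) (Fin d → Fin n) ℝ :=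
  Matrix.of fun u u' => if hammingDist u u' = 1 then ((d : ℝ) * (n - 1))⁻¹ else 0

variable {n d : ℕ}

def distTo (w u : Fin d → Fin n) : Fin (d + 1) :=
  ⟨hammingDist u w, Nat.lt_succ_of_le (hammingDist_le_card_fintype.trans_eq (Fintype.card_fin d))⟩

lemma distTo_eq_iff {w u : Fin d → Fin n} {z : Fin (d + 1)} :
    distTo w u = z ↔ hammingDist u w = z :=
  Fin.ext_iff

lemma Q_isSymm : (Q n d).IsSymm :=
  Matrix.IsSymm.ext fun u u' => by simp [Q, hammingDist_comm]

lemma Q_mul_lumpMatrix (hn : 2 ≤ n) (w : Fin d → Fin n) :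
    Q n d * lumpMatrix (distTo w) = lumpMatrix (distTo w) * BD.P n d := by
  ext u z
  set x := hammingDist u w with hx
  have hagree : (#{i | u i = w i} : ℝ) + x = d := by
    exact_mod_cast (Fintype.card_fin d) ▸ card_filter_eq_add_hammingDist u w
  calc (Q n d * lumpMatrix (distTo w)) u z
      = ((d : ℝ) * (n - 1))⁻¹ *
          ∑ u' with hammingDist u u' = 1, if hammingDist u' w = z then (1 : ℝ) else 0 := by
        rw [Matrix.mul_apply, sum_filter, mul_sum]
        refine sum_congr rfl fun u' _ => ?_
        simp only [Q, lumpMatrix, Matrix.of_apply, distTo_eq_iff]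
        split_ifs <;> simp
    _ = ((d : ℝ) * (n - 1))⁻¹ *
          ((#{i | u i = w i} : ℝ) * ((n - 1) * if x + 1 = z then 1 else 0) +
            x * ((if (z : ℕ) + 1 = x then 1 else 0) + (n - 2) * if x = z then 1 else 0)) := by
        rw [sum_hammingDist_eq_one]
        simp only [sum_erase_hammingDist_update_eq, Fintype.card_fin]
        rw [sum_ite, sum_const, sum_const, nsmul_eq_mul, nsmul_eq_mul]
        rfl
    _ = (lumpMatrix (distTo w) * BD.P n d) u z := by
        have hn' : (n : ℝ) - 1 ≠ 0 := by
          have : (2 : ℝ) ≤ n := by exact_mod_cast hn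
          linarith
        rw [lumpMatrix_mul_apply]
        simp only [BD.P, Matrix.of_apply, distTo, ← hx]
        rw [eq_sub_of_add_eq hagree]
        split_ifs <;> first | omega | skip
        · have hd : (d : ℝ) ≠ 0 := by
            have := z.isLt
            norm_cast
            omega
          field_simp
          ring
        · field_simp
          ring
        · field_simp
          ring
        · simp

lemma exists_distTo_eq (hn : 2 ≤ n) (x : Fin (d + 1)) : ∃ w v : Fin d → Fin n, distTo w v = x := by
  let w : Fin d → Fin n := fun _ => ⟨0, by omega⟩
  have hcard : 0 < #{u | hammingDist u w = x} := by
    rw [card_hammingDist_eq w (by simpa using x.is_le), Fintype.card_fin, Fintype.card_fin]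
    exact Nat.mul_pos (Nat.choose_pos x.is_le) (Nat.pow_pos (by omega))
  obtain ⟨v, hv⟩ := card_pos.1 hcard
  exact ⟨w, v, distTo_eq_iff.2 (mem_filter.1 hv).2⟩

lemma pow_row_vecMul_lumpMatrix (hn : 2 ≤ n) (w v : Fin d → Fin n) (t : ℕ) :
    (Q n d ^ t) v ᵥ* lumpMatrix (distTo w) = (BD.P n d ^ t) (distTo w v) := by
  funext z
  rw [← mul_apply_eq_vecMul, pow_mul_lumpMatrix (Q_mul_lumpMatrix hn w), lumpMatrix_mul_apply]

lemma pow_apply (hn : 2 ≤ n) (v u : Fin d → Fin n) (t : ℕ) :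
    (Q n d ^ t) v u = (BD.P n d ^ t) (distTo v u) 0 := by
  have hfiber : ({u' | distTo v u' = 0} : Finset (Fin d → Fin n)) = {v} := by
    ext u'
    simp [distTo_eq_iff]
  rw [← (Q_isSymm.pow t).apply, ← congrFun (pow_row_vecMul_lumpMatrix hn v u t) 0,
    vecMul_lumpMatrix_apply, hfiber, sum_singleton]

lemma const_vecMul_lumpMatrix (hn : 1 ≤ n) (w : Fin d → Fin n) :
    (fun _ => ((n : ℝ) ^ d)⁻¹) ᵥ* lumpMatrix (distTo w) = BD.pi n d := by
  funext z
  simp only [vecMul_lumpMatrix_apply, sum_const, distTo_eq_iff, nsmul_eq_mul, BD.pi]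
  rw [card_hammingDist_eq w (by simpa using z.is_le), Fintype.card_fin, Fintype.card_fin]
  push_cast [Nat.cast_sub hn]
  ring

lemma tv_pow_le (hn : 2 ≤ n) (w v : Fin d → Fin n) (t : ℕ) :
    tv ((BD.P n d ^ t) (distTo w v)) (BD.pi n d) ≤ tv ((Q n d ^ t) v) fun _ => ((n : ℝ) ^ d)⁻¹ := by
  rw [← pow_row_vecMul_lumpMatrix hn w v t, ← const_vecMul_lumpMatrix (by omega) w]
  exact tv_vecMul_lumpMatrix_le _ _

lemma tv_pow_zero_eq (hn : 2 ≤ n) (v : Fin d → Fin n) (t : ℕ) :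
    tv ((BD.P n d ^ t) 0) (BD.pi n d) = tv ((Q n d ^ t) v) fun _ => ((n : ℝ) ^ d)⁻¹ := by
  have hrow : (Q n d ^ t) v = (fun y => (BD.P n d ^ t) y 0) ∘ distTo v :=
    funext fun u => pow_apply hn v u t
  have hself : distTo v v = 0 := distTo_eq_iff.2 (hammingDist_self v)
  rw [← hself, ← pow_row_vecMul_lumpMatrix hn v v t, ← const_vecMul_lumpMatrix (by omega) v, hrow]
  exact tv_vecMul_lumpMatrix_comp (f := distTo v) _ fun _ => ((n : ℝ) ^ d)⁻¹

end RookWalk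

lemma BD.tv_pow_le_tv_pow_zero {n d : ℕ} (hn : 2 ≤ n) (t : ℕ) (x : Fin (d + 1)) :
    tv ((BD.P n d ^ t) x) (BD.pi n d) ≤ tv ((BD.P n d ^ t) 0) (BD.pi n d) := by
  obtain ⟨w, v, rfl⟩ := RookWalk.exists_distTo_eq hn x
  rw [RookWalk.tv_pow_zero_eq hn v t]
  exact RookWalk.tv_pow_le hn w v t

theorem rwbd_worst_case_at_zero_general (n d : ℕ) (hn : 3 ≤ n) (t : ℕ) :
    (⨆ x : Fin (d + 1), tv ((BD.P n d ^ t) x) (BD.pi n d)) =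
      tv ((BD.P n d ^ t) 0) (BD.pi n d) :=
  le_antisymm (ciSup_le (BD.tv_pow_le_tv_pow_zero (by omega) t))
    (le_ciSup (f := fun x : Fin (d + 1) => tv ((BD.P n d ^ t) x) (BD.pi n d))
      (Set.finite_range _).bddAbove 0)

/-- The worst-case TV distance to stationarity of the RWBD chain is attained at state 0. -/
theorem rwbd_worst_case_at_zero (n d : ℕ) (hn : 3 ≤ n) (hd : 2 ≤ d) (t : ℕ) :
    (⨆ x : Fin (d + 1), tv ((BD.P n d ^ t) x) (BD.pi n d)) =
      tv ((BD.P n d ^ t) 0) (BD.pi n d) :=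
  rwbd_worst_case_at_zero_general n d hn t
end
end

section
/- There exists a function c_l : (0,1) → ℝ, depending only on ε, such that for every board length n ≥ 3, every dimension d ≥ 2, and every ε ∈ (0,1), the mixing time of the Rook's Walk satisfies t_mix(ε) ≥ (d(n−1)/(2n))·log d + c_l(ε)·(d(n−1)/n). -/
/-!
Wilson's method. For `a : Fin n` the statistic `f x = #{i | x i = a} - d / n` is an eigenfunction
of the walk with eigenvalue `λ = 1 - 1 / trel`, `trel = d (n - 1) / n`, and one step changes it by
at most one, so `P f² ≤ λ² f² + 1`. Started at the corner `(a, …, a)`, where `f = trel`, the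
mean of `f` at time `t` is `λ^t trel` while its variance, and its second moment under the
uniform distribution, stay below `trel`. Chebyshev's inequality then gives
`d(t) ≥ 1 - 8 / (trel λ^(2t))`, which is close to one until `t ≈ (trel / 2) log trel`, and
`log trel ≥ log d - log (3 / 2)`. The infimum defining `t_mix(ε)` is attained because the walk
mixes at all: for `n ≥ 3` every entry of `P^(d+1)` is positive, and Doeblin's contraction applies.
-/

open Finset

noncomputable section

/-- The state space of the Rook's Walk: a `d`-dimensional board of side length `n`. -/
abbrev RW.State (n d : ℕ) : Type := Fin d → Fin n

/-- The transition matrix of the Rook's Walk on `{1,…,n}^d`. -/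
def RW.P (n d : ℕ) : Matrix (RW.State n d) (RW.State n d) ℝ :=
  Matrix.of fun x y =>
    if hammingDist x y = 1 then 1 / ((d : ℝ) * ((n : ℝ) - 1)) else 0

/-- The (uniform) stationary distribution of the Rook's Walk. -/
def RW.pi (n d : ℕ) : RW.State n d → ℝ := fun _ => 1 / (n : ℝ) ^ d

/-- Worst-case total variation distance to stationarity at time `t`. -/
def RW.dist (n d : ℕ) (t : ℕ) : ℝ :=
  ⨆ x : RW.State n d, tv ((RW.P n d ^ t) x) (RW.pi n d)

/-- The mixing time of the Rook's Walk. -/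
def RW.tmix (n d : ℕ) (ε : ℝ) : ℕ := sInf {t : ℕ | RW.dist n d t ≤ ε}

theorem sum_sub_sum_le_tv {S : Type*} [Fintype S] {μ ν : S → ℝ} (h : ∑ s, μ s = ∑ s, ν s)
    (A : Finset S) : ∑ s ∈ A, μ s - ∑ s ∈ A, ν s ≤ tv μ ν := by
  classical
  have hA : ∑ s ∈ A, (μ s - ν s) ≤ ∑ s ∈ A, |μ s - ν s| :=
    sum_le_sum fun s _ => le_abs_self _
  have hAc : ∑ s ∈ Aᶜ, (ν s - μ s) ≤ ∑ s ∈ Aᶜ, |μ s - ν s| :=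
    sum_le_sum fun s _ => abs_sub_comm (μ s) (ν s) ▸ le_abs_self _
  have hμ := sum_add_sum_compl A μ
  have hν := sum_add_sum_compl A ν
  have habs := sum_add_sum_compl A fun s => |μ s - ν s|
  simp only [sum_sub_distrib] at hA hAc
  unfold tv
  linarith

theorem tv_le_one {S : Type*} [Fintype S] {μ ν : S → ℝ} (hμ0 : 0 ≤ μ) (hν0 : 0 ≤ ν)
    (hμ1 : ∑ s, μ s = 1) (hν1 : ∑ s, ν s = 1) : tv μ ν ≤ 1 := by
  have : ∑ s, |μ s - ν s| ≤ ∑ s, (μ s + ν s) :=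
    sum_le_sum fun s _ => (abs_sub _ _).trans_eq <| by
      rw [abs_of_nonneg (hμ0 s), abs_of_nonneg (hν0 s)]
  rw [sum_add_distrib, hμ1, hν1] at this
  unfold tv
  linarith

theorem mul_sum_le_sum_mul_of_le {S : Type*} [Fintype S] {w g : S → ℝ} (hw : 0 ≤ w) (hg : 0 ≤ g)
    {s : Finset S} {a : ℝ} (ha : ∀ y ∈ s, a ≤ g y) : a * ∑ y ∈ s, w y ≤ ∑ y, w y * g y :=
  calc a * ∑ y ∈ s, w y = ∑ y ∈ s, w y * a := by rw [mul_sum]; simp only [mul_comm]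
    _ ≤ ∑ y ∈ s, w y * g y := sum_le_sum fun y hy => mul_le_mul_of_nonneg_left (ha y hy) (hw y)
    _ ≤ ∑ y, w y * g y :=
      sum_le_sum_of_subset_of_nonneg (subset_univ s) fun y _ _ => mul_nonneg (hw y) (hg y)

theorem one_sub_le_tv_of_moments {S : Type*} [Fintype S] {μ ν f : S → ℝ} {m V : ℝ}
    (hμ0 : 0 ≤ μ) (hν0 : 0 ≤ ν) (hμ1 : ∑ s, μ s = 1) (hν1 : ∑ s, ν s = 1) (hm : 0 < m)
    (hμf : ∑ s, μ s * (f s - m) ^ 2 ≤ V) (hνf : ∑ s, ν s * f s ^ 2 ≤ V) :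
    1 - 8 * V / m ^ 2 ≤ tv μ ν := by
  classical
  set A : Finset S := {s | m / 2 < f s}
  have hμA : m ^ 2 / 4 * ∑ s ∈ Aᶜ, μ s ≤ V := by
    refine (mul_sum_le_sum_mul_of_le hμ0 (fun s => sq_nonneg (f s - m)) fun s hs => ?_).trans hμf
    have : f s ≤ m / 2 := by simpa [A] using hs
    nlinarith
  have hνA : m ^ 2 / 4 * ∑ s ∈ A, ν s ≤ V := by
    refine (mul_sum_le_sum_mul_of_le hν0 (fun s => sq_nonneg (f s)) fun s hs => ?_).trans hνf
    have : m / 2 < f s := by simpa [A] using hs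
    nlinarith
  have hsplit := sum_add_sum_compl A μ
  have htv := sum_sub_sum_le_tv (hμ1.trans hν1.symm) A
  have hsmall : ∑ s ∈ Aᶜ, μ s + ∑ s ∈ A, ν s ≤ 8 * V / m ^ 2 := by
    rw [le_div_iff₀ (by positivity)]
    linarith
  linarith

theorem mul_apply_pos_of_nonneg {l m o : Type*} [Fintype m] {A : Matrix l m ℝ}
    {B : Matrix m o ℝ} (hA : ∀ i j, 0 ≤ A i j) (hB : ∀ i j, 0 ≤ B i j) {x : l} {z : m} {y : o}
    (hxz : 0 < A x z) (hzy : 0 < B z y) : 0 < (A * B) x y :=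
  (mul_pos hxz hzy).trans_le <|
    single_le_sum (f := fun w => A x w * B w y) (fun w _ => mul_nonneg (hA x w) (hB w y))
      (mem_univ z)

open Matrix in
theorem sum_abs_vecMul_le {S : Type*} [Fintype S] {Q : Matrix S S ℝ}
    (hQ : ∀ x, ∑ y, Q x y = 1) {δ : ℝ} (hδ : ∀ x y, δ ≤ Q x y) {ν : S → ℝ} (hν : ∑ s, ν s = 0) :
    ∑ y, |(ν ᵥ* Q) y| ≤ (1 - Fintype.card S * δ) * ∑ s, |ν s| := by
  have hcol : ∀ y, |(ν ᵥ* Q) y| ≤ ∑ s, |ν s| * (Q s y - δ) := fun y =>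
    calc |(ν ᵥ* Q) y| = |∑ s, ν s * (Q s y - δ)| := by
          simp only [vecMul, dotProduct, mul_sub, sum_sub_distrib, ← sum_mul, hν, zero_mul,
            sub_zero]
      _ ≤ ∑ s, |ν s * (Q s y - δ)| := abs_sum_le_sum_abs _ _
      _ = ∑ s, |ν s| * (Q s y - δ) := by
          simp only [abs_mul, abs_of_nonneg (sub_nonneg.2 (hδ _ y))]
  calc ∑ y, |(ν ᵥ* Q) y| ≤ ∑ y, ∑ s, |ν s| * (Q s y - δ) := sum_le_sum fun y _ => hcol y
    _ = ∑ s, |ν s| * (1 - Fintype.card S * δ) := by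
        rw [sum_comm]
        simp only [← mul_sum, sum_sub_distrib, hQ, sum_const, card_univ, nsmul_eq_mul]
    _ = (1 - Fintype.card S * δ) * ∑ s, |ν s| := by rw [← sum_mul, mul_comm]

section StochasticMatrix

open Matrix

variable {S : Type*} [Fintype S] [DecidableEq S] {P : Matrix S S ℝ}

theorem pow_mulVec_eq_smul_of_mulVec_eq_smul {f : S → ℝ} {c : ℝ} (hf : P *ᵥ f = c • f) (t : ℕ) :
    (P ^ t) *ᵥ f = c ^ t • f := by
  induction t with
  | zero => simp
  | succ t ih => rw [pow_succ, ← mulVec_mulVec, hf, mulVec_smul, ih, smul_smul, pow_succ']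

theorem mulVec_le_mulVec_of_mem_rowStochastic (hP : P ∈ rowStochastic ℝ S) {u v : S → ℝ}
    (h : u ≤ v) : P *ᵥ u ≤ P *ᵥ v := by
  intro x
  have := nonneg_mulVec_of_mem_rowStochastic hP (x := v - u) (fun s => sub_nonneg.2 (h s)) x
  rw [mulVec_sub, Pi.sub_apply, sub_nonneg] at this
  exact this

theorem pow_mulVec_le_of_mulVec_le (hP : P ∈ rowStochastic ℝ S) {g : S → ℝ} {a b V : ℝ}
    (hg : ∀ x, (P *ᵥ g) x ≤ a * g x + b) (ha : 0 ≤ a) (hV0 : 0 ≤ V) (hV : a * V + b ≤ V)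
    (t : ℕ) (x : S) :
    ((P ^ t) *ᵥ g) x ≤ a ^ t * g x + V := by
  induction t generalizing x with
  | zero => simpa using hV0
  | succ t ih =>
    have hPt : P ^ t ∈ rowStochastic ℝ S := pow_mem hP t
    have hg' : P *ᵥ g ≤ a • g + b • 1 := fun x => by simpa using hg x
    calc ((P ^ (t + 1)) *ᵥ g) x = ((P ^ t) *ᵥ (P *ᵥ g)) x := by rw [pow_succ, mulVec_mulVec]
      _ ≤ ((P ^ t) *ᵥ (a • g + b • 1)) x := mulVec_le_mulVec_of_mem_rowStochastic hPt hg' x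
      _ = a * ((P ^ t) *ᵥ g) x + b := by
        rw [mulVec_add, mulVec_smul, mulVec_smul, one_vecMul_of_mem_rowStochastic hPt]; simp
      _ ≤ a * (a ^ t * g x + V) + b := by gcongr; exact ih x
      _ ≤ a ^ (t + 1) * g x + V := by rw [pow_succ]; nlinarith

theorem sum_le_card_mul_of_mulVec_le (hP : P ∈ doublyStochastic ℝ S) {g : S → ℝ} {a b V : ℝ}
    (hg : ∀ x, (P *ᵥ g) x ≤ a * g x + b) (ha : a < 1) (hV : a * V + b ≤ V) :
    ∑ s, g s ≤ Fintype.card S * V := by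
  have hsum : ∑ s, g s ≤ a * ∑ s, g s + Fintype.card S * b := by
    calc ∑ s, g s = ∑ s, (P *ᵥ g) s := (sum_mulVec_of_mem_doublyStochastic hP).symm
      _ ≤ ∑ s, (a * g s + b) := sum_le_sum fun s _ => hg s
      _ = a * ∑ s, g s + Fintype.card S * b := by
        rw [sum_add_distrib, mul_sum, sum_const, nsmul_eq_mul, card_univ]
  have hN : (0 : ℝ) ≤ Fintype.card S := Nat.cast_nonneg _
  refine le_of_mul_le_mul_left ?_ (sub_pos.2 ha)
  nlinarith

theorem one_sub_le_tv_pow_apply (hP : P ∈ doublyStochastic ℝ S) {f : S → ℝ} {c b V : ℝ}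
    (hf : P *ᵥ f = c • f) (hf2 : ∀ x, (P *ᵥ f ^ 2) x ≤ c ^ 2 * f x ^ 2 + b) (hc : c ^ 2 < 1)
    (hV0 : 0 ≤ V) (hV : c ^ 2 * V + b ≤ V) (t : ℕ) (x : S) (hm : 0 < c ^ t * f x) :
    1 - 8 * V / (c ^ t * f x) ^ 2 ≤ tv ((P ^ t) x) fun _ => 1 / Fintype.card S := by
  have hPt : P ^ t ∈ doublyStochastic ℝ S := pow_mem hP t
  have hN : (0 : ℝ) < Fintype.card S := Nat.cast_pos.2 (Fintype.card_pos_iff.2 ⟨x⟩)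
  have hmean : ∑ y, (P ^ t) x y * f y = c ^ t * f x :=
    congrFun (pow_mulVec_eq_smul_of_mulVec_eq_smul hf t) x
  have hsq : ∑ y, (P ^ t) x y * f y ^ 2 ≤ (c ^ t * f x) ^ 2 + V := by
    have := pow_mulVec_le_of_mulVec_le
      (mem_doublyStochastic_iff_mem_rowStochastic_and_mem_colStochastic.1 hP).1
      hf2 (sq_nonneg c) hV0 hV t x
    calc ∑ y, (P ^ t) x y * f y ^ 2 = ((P ^ t) *ᵥ f ^ 2) x := rfl
      _ ≤ (c ^ 2) ^ t * (f ^ 2) x + V := this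
      _ = (c ^ t * f x) ^ 2 + V := by rw [Pi.pow_apply]; ring
  refine one_sub_le_tv_of_moments (f := f) (fun y => nonneg_of_mem_doublyStochastic hPt)
    (fun _ => by positivity) (sum_row_of_mem_doublyStochastic hPt x) ?_ hm ?_ ?_
  · simp [hN.ne']
  · have hexp : ∀ y, (P ^ t) x y * (f y - c ^ t * f x) ^ 2 = (P ^ t) x y * f y ^ 2
        - 2 * (c ^ t * f x) * ((P ^ t) x y * f y) + (c ^ t * f x) ^ 2 * (P ^ t) x y := by
      intro y; ring
    simp only [hexp, sum_add_distrib, sum_sub_distrib, ← mul_sum, hmean,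
      sum_row_of_mem_doublyStochastic hPt x]
    linarith
  · have := sum_le_card_mul_of_mulVec_le hP hf2 hc hV
    rw [← mul_sum]
    calc 1 / (Fintype.card S : ℝ) * ∑ s, f s ^ 2 ≤ 1 / Fintype.card S * (Fintype.card S * V) :=
          mul_le_mul_of_nonneg_left this (by positivity)
      _ = V := by field_simp

theorem exists_tv_pow_le (hP : P ∈ doublyStochastic ℝ S) {k : ℕ} (hpos : ∀ x y, 0 < (P ^ k) x y)
    {ε : ℝ} (hε : 0 < ε) : ∃ t, ∀ x, tv ((P ^ t) x) (fun _ => 1 / Fintype.card S) ≤ ε := by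
  rcases isEmpty_or_nonempty S with hS | hS
  · exact ⟨0, fun x => isEmptyElim x⟩
  set π : S → ℝ := fun _ => 1 / Fintype.card S
  have hN : (0 : ℝ) < Fintype.card S := Nat.cast_pos.2 Fintype.card_pos
  have hπ0 : 0 ≤ π := fun _ => by positivity
  have hπ1 : ∑ s, π s = 1 := by simp [π, hN.ne']
  have hπP : ∀ j, π ᵥ* (P ^ j) = π := fun j => by
    rw [show π = (1 / Fintype.card S : ℝ) • 1 by ext; simp [π], smul_vecMul,
      one_vecMul_of_mem_doublyStochastic (pow_mem hP j)]
  obtain ⟨⟨x₀, y₀⟩, hmin⟩ := Finite.exists_min fun p : S × S => (P ^ k) p.1 p.2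
  set δ := (P ^ k) x₀ y₀
  have hδ : ∀ x y, δ ≤ (P ^ k) x y := fun x y => hmin (x, y)
  set q := 1 - Fintype.card S * δ
  have hq0 : 0 ≤ q := by
    have : Fintype.card S * δ ≤ ∑ y, (P ^ k) x₀ y := by
      simpa using sum_le_sum fun y (_ : y ∈ univ) => hδ x₀ y
    rw [sum_row_of_mem_doublyStochastic (pow_mem hP k)] at this
    linarith
  have hq1 : q < 1 := by have := hpos x₀ y₀; simp only [q]; nlinarith
  have hcontract : ∀ m x, tv ((P ^ (k * m)) x) π ≤ q ^ m := by
    intro m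
    induction m with
    | zero =>
      intro x
      simpa using tv_le_one (fun y => nonneg_of_mem_doublyStochastic (pow_mem hP 0)) hπ0
        (sum_row_of_mem_doublyStochastic (pow_mem hP 0) x) hπ1
    | succ m ih =>
      intro x
      have hrow : (P ^ (k * (m + 1))) x - π = ((P ^ (k * m)) x - π) ᵥ* P ^ k := by
        rw [sub_vecMul, hπP, ← mul_apply_eq_vecMul, ← pow_add, mul_add, mul_one]
      have hmass : ∑ s, ((P ^ (k * m)) x - π) s = 0 := by
        simp [sum_sub_distrib, sum_row_of_mem_doublyStochastic (pow_mem hP _) x, hπ1]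
      have := sum_abs_vecMul_le (sum_row_of_mem_doublyStochastic (pow_mem hP k)) hδ hmass
      rw [← hrow] at this
      unfold tv at ih ⊢
      simp only [Pi.sub_apply] at this
      rw [pow_succ]
      nlinarith [ih x]
  obtain ⟨m, hm⟩ := exists_pow_lt_of_lt_one hε hq1
  exact ⟨k * m, fun x => (hcontract m x).trans hm.le⟩

end StochasticMatrix

section Hamming

variable {ι α : Type*} [Fintype ι] [DecidableEq ι] [DecidableEq α]

theorem hammingDist_update_eq_one (x : ι → α) {i : ι} {b : α} (hb : b ≠ x i) :
    hammingDist x (Function.update x i b) = 1 := by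
  rw [hammingDist, card_eq_one]
  refine ⟨i, ext fun j => ?_⟩
  by_cases hj : j = i
  · subst hj; simpa using hb.symm
  · simp [hj]

theorem hammingDist_update_add_one {x y : ι → α} {i : ι} (hi : x i ≠ y i) :
    hammingDist (Function.update x i (y i)) y + 1 = hammingDist x y := by
  have hset : ({j | Function.update x i (y i) j ≠ y j} : Finset ι) =
      ({j | x j ≠ y j} : Finset ι).erase i := by
    ext j
    by_cases hj : j = i
    · subst hj; simp
    · simp [hj]
  rw [hammingDist, hammingDist, hset, card_erase_add_one (by simpa using hi)]

theorem exists_eq_update_of_hammingDist_eq_one {x y : ι → α} (h : hammingDist x y = 1) :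
    ∃ i, y i ≠ x i ∧ y = Function.update x i (y i) := by
  obtain ⟨i, hi⟩ := card_eq_one.1 h
  have hdiff : ∀ j, x j ≠ y j ↔ j = i := fun j => by
    simpa using congrArg (j ∈ ·) hi
  refine ⟨i, fun h => (hdiff i).2 rfl h.symm, funext fun j => ?_⟩
  by_cases hj : j = i
  · subst hj; simp
  · simpa [hj] using (not_not.1 (mt (hdiff j).1 hj)).symm

theorem sum_hammingDist_eq_one_s17 [Fintype α] {β : Type*} [AddCommMonoid β] (x : ι → α)
    (F : (ι → α) → β) :
    ∑ y with hammingDist x y = 1, F y = ∑ i, ∑ b ∈ univ.erase (x i), F (Function.update x i b) := by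
  rw [sum_sigma']
  refine (sum_bij (fun p _ => Function.update x p.1 p.2) ?_ ?_ ?_ fun _ _ => rfl).symm
  · rintro ⟨i, b⟩ hp
    simpa using hammingDist_update_eq_one x (by simpa using hp)
  · rintro ⟨i, b⟩ hp ⟨j, c⟩ hq heq
    simp only [mem_sigma, mem_univ, mem_erase, true_and] at hp hq
    by_cases hij : i = j
    · subst hij
      simpa using congrFun heq i
    · have := congrFun heq i
      simp [Function.update_of_ne hij] at this
      exact absurd this hp.1
  · intro y hy
    obtain ⟨i, hi, hy⟩ := exists_eq_update_of_hammingDist_eq_one (by simpa using hy)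
    exact ⟨⟨i, y i⟩, by simpa using hi, hy.symm⟩

theorem exists_hammingDist_eq_one [Nonempty ι] [Nontrivial α] (x : ι → α) :
    ∃ z, hammingDist x z = 1 := by
  obtain ⟨i⟩ := ‹Nonempty ι›
  obtain ⟨b, hb⟩ := exists_ne (x i)
  exact ⟨_, hammingDist_update_eq_one x hb⟩

theorem exists_hammingDist_eq_one_of_ne {x y : ι → α} (hxy : x ≠ y) :
    ∃ z, hammingDist x z = 1 ∧ hammingDist z y + 1 = hammingDist x y := by
  obtain ⟨i, hi⟩ := Function.ne_iff.1 hxy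
  exact ⟨_, hammingDist_update_eq_one x (Ne.symm hi), hammingDist_update_add_one hi⟩

theorem exists_hammingDist_eq_one_of_le_succ [Nonempty ι] [Nontrivial α] {x y : ι → α} {k : ℕ}
    (hk : 1 ≤ k) (h : hammingDist x y ≤ k + 1) :
    ∃ z, hammingDist x z = 1 ∧ hammingDist z y ≤ k := by
  by_cases hxy : x = y
  · subst hxy
    obtain ⟨z, hz⟩ := exists_hammingDist_eq_one x
    exact ⟨z, hz, by rw [hammingDist_comm, hz]; exact hk⟩
  · obtain ⟨z, hz, hzy⟩ := exists_hammingDist_eq_one_of_ne hxy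
    exact ⟨z, hz, by omega⟩

-- This fails for `card α = 2` at distance one: the walk on `{1, 2}^d` is periodic.
theorem exists_hammingDist_eq_one_eq_one [Nonempty ι] [Fintype α] (hα : 3 ≤ Fintype.card α)
    {x y : ι → α} (h : hammingDist x y ≤ 2) :
    ∃ z, hammingDist x z = 1 ∧ hammingDist z y = 1 := by
  have : Nontrivial α := Fintype.one_lt_card_iff_nontrivial.1 (by omega)
  by_cases hxy : x = y
  · subst hxy
    obtain ⟨z, hz⟩ := exists_hammingDist_eq_one x
    exact ⟨z, hz, by rw [hammingDist_comm, hz]⟩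
  obtain ⟨i, hi⟩ := Function.ne_iff.1 hxy
  have hred := hammingDist_update_add_one hi
  by_cases hlast : hammingDist (Function.update x i (y i)) y = 1
  · exact ⟨_, hammingDist_update_eq_one x (Ne.symm hi), hlast⟩
  have hy : Function.update x i (y i) = y := hammingDist_eq_zero.1 (by omega)
  obtain ⟨c, -, hc⟩ := exists_mem_notMem_of_card_lt_card (s := {x i, y i}) (t := univ)
    ((card_le_two).trans_lt (by rw [card_univ]; omega))
  simp only [mem_insert, mem_singleton, not_or] at hc
  refine ⟨Function.update x i c, hammingDist_update_eq_one x hc.1, ?_⟩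
  rw [← hy, ← Function.update_idem c (y i) x]
  exact hammingDist_update_eq_one _ (by simpa using Ne.symm hc.2)

end Hamming

theorem cast_card_univ_erase_fin {n : ℕ} (hn : 1 ≤ n) (a : Fin n) :
    ((univ.erase a).card : ℝ) = n - 1 := by
  rw [card_erase_of_mem (mem_univ a), card_univ, Fintype.card_fin, Nat.cast_sub hn, Nat.cast_one]

theorem sum_univ_erase_of_sum_eq_zero {α β : Type*} [Fintype α] [DecidableEq α] [AddCommGroup β]
    {g : α → β} (hg : ∑ a, g a = 0) (a : α) : ∑ b ∈ univ.erase a, g b = -g a := by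
  rw [sum_erase_eq_sub (mem_univ a), hg, zero_sub]

namespace RW

open Matrix

variable {n d : ℕ}

/-- The relaxation time `1 / (1 - λ)` of the eigenvalue `λ = 1 - n / (d (n - 1))`. -/
def trel (n d : ℕ) : ℝ := (d : ℝ) * ((n : ℝ) - 1) / (n : ℝ)

def coordSum (g : Fin n → ℝ) (x : State n d) : ℝ := ∑ i, g (x i)

theorem mulVec_P_apply (F : State n d → ℝ) (x : State n d) :
    (P n d *ᵥ F) x =
      ((d : ℝ) * ((n : ℝ) - 1))⁻¹ * ∑ i, ∑ b ∈ univ.erase (x i), F (Function.update x i b) := by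
  rw [← sum_hammingDist_eq_one_s17, mul_sum, sum_filter]
  simp only [mulVec, dotProduct, P, of_apply, ite_mul, zero_mul, one_div]

theorem P_mem_doublyStochastic (hn : 2 ≤ n) (hd : 1 ≤ d) :
    P n d ∈ doublyStochastic ℝ (State n d) := by
  have hden : (0 : ℝ) < d * (n - 1) := by
    have : (2 : ℝ) ≤ n := by exact_mod_cast hn
    have : (1 : ℝ) ≤ d := by exact_mod_cast hd
    nlinarith
  have hrow : ∀ x, ∑ y, P n d x y = 1 := fun x => by
    have := mulVec_P_apply (n := n) (d := d) 1 x
    simp only [mulVec, dotProduct, Pi.one_apply, mul_one, sum_const, nsmul_eq_mul,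
      cast_card_univ_erase_fin (by omega : 1 ≤ n), card_univ, Fintype.card_fin] at this
    rw [this, inv_mul_cancel₀ hden.ne']
  refine mem_doublyStochastic_iff_sum.2 ⟨fun x y => ?_, hrow, fun y => ?_⟩
  · simp only [P, of_apply]
    split_ifs <;> positivity
  · simpa only [P, of_apply, hammingDist_comm] using hrow y

theorem coordSum_update (g : Fin n → ℝ) (x : State n d) (i : Fin d) (b : Fin n) :
    coordSum g (Function.update x i b) = coordSum g x - g (x i) + g b := by
  simp only [coordSum, Function.apply_update (fun _ => g), sum_update_of_mem (mem_univ i),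
    sum_eq_add_sum_sdiff_singleton_of_mem (mem_univ i) fun j => g (x j)]
  ring

variable {g : Fin n → ℝ}

theorem sum_erase_coordSum_update (hn : 1 ≤ n) (hg : ∑ a, g a = 0) (x : State n d) (i : Fin d) :
    ∑ b ∈ univ.erase (x i), coordSum g (Function.update x i b) =
      (n - 1) * coordSum g x - n * g (x i) := by
  simp only [coordSum_update, sum_add_distrib, sum_const, nsmul_eq_mul, cast_card_univ_erase_fin hn,
    sum_univ_erase_of_sum_eq_zero hg]
  ring

theorem sum_erase_coordSum_update_sq_le (hn : 1 ≤ n) (hg : ∑ a, g a = 0)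
    (hg1 : ∀ a b, (g a - g b) ^ 2 ≤ 1) (x : State n d) (i : Fin d) :
    ∑ b ∈ univ.erase (x i), coordSum g (Function.update x i b) ^ 2 ≤
      (n - 1) * coordSum g x ^ 2 - 2 * n * coordSum g x * g (x i) + (n - 1) := by
  have hexp : ∀ b, coordSum g (Function.update x i b) ^ 2 = coordSum g x ^ 2 +
      2 * coordSum g x * (g b - g (x i)) + (g b - g (x i)) ^ 2 := fun b => by
    rw [coordSum_update]; ring
  have hjump : ∑ b ∈ univ.erase (x i), (g b - g (x i)) ^ 2 ≤ n - 1 := by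
    calc ∑ b ∈ univ.erase (x i), (g b - g (x i)) ^ 2 ≤ ∑ b ∈ univ.erase (x i), 1 :=
          sum_le_sum fun b _ => hg1 b (x i)
      _ = n - 1 := by rw [sum_const, nsmul_eq_mul, cast_card_univ_erase_fin hn, mul_one]
  simp only [hexp, sum_add_distrib, ← mul_sum, sum_sub_distrib, sum_const, nsmul_eq_mul,
    cast_card_univ_erase_fin hn, sum_univ_erase_of_sum_eq_zero hg]
  nlinarith

theorem mulVec_P_coordSum (hn : 2 ≤ n) (hd : 1 ≤ d) (hg : ∑ a, g a = 0) :
    P n d *ᵥ coordSum g = (1 - (trel n d)⁻¹) • coordSum g := by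
  ext x
  have hsum : ∑ i, ((n - 1 : ℝ) * coordSum g x - n * g (x i)) =
      ((d : ℝ) * (n - 1) - n) * coordSum g x := by
    rw [sum_sub_distrib, sum_const, ← mul_sum, card_univ, Fintype.card_fin, nsmul_eq_mul,
      coordSum]
    ring
  have : (n : ℝ) - 1 ≠ 0 := by
    have : (2 : ℝ) ≤ n := by exact_mod_cast hn
    linarith
  have : (d : ℝ) ≠ 0 := by positivity
  rw [mulVec_P_apply, sum_congr rfl fun i _ => sum_erase_coordSum_update (by omega) hg x i, hsum,
    Pi.smul_apply, smul_eq_mul, trel]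
  field_simp

theorem mulVec_P_coordSum_sq_le (hn : 2 ≤ n) (hd : 1 ≤ d) (hg : ∑ a, g a = 0)
    (hg1 : ∀ a b, (g a - g b) ^ 2 ≤ 1) (x : State n d) :
    (P n d *ᵥ coordSum g ^ 2) x ≤ (1 - (trel n d)⁻¹) ^ 2 * coordSum g x ^ 2 + 1 := by
  set F := coordSum g x
  have hsum : ∑ i, ((n - 1 : ℝ) * F ^ 2 - 2 * n * F * g (x i) + (n - 1)) =
      (d : ℝ) * (n - 1) * F ^ 2 - 2 * n * F ^ 2 + d * (n - 1) := by
    rw [sum_add_distrib, sum_sub_distrib, sum_const, sum_const, ← mul_sum, card_univ,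
      Fintype.card_fin, nsmul_eq_mul, nsmul_eq_mul]
    simp only [F, coordSum]
    ring
  have hn' : (2 : ℝ) ≤ n := by exact_mod_cast hn
  have hd' : (1 : ℝ) ≤ d := by exact_mod_cast hd
  have hden : (0 : ℝ) < d * (n - 1) := by nlinarith
  set c := ((d : ℝ) * (n - 1))⁻¹
  have hc : 0 < c := inv_pos.2 hden
  have hcd : c * (d * (n - 1)) = 1 := inv_mul_cancel₀ hden.ne'
  have htrel : (trel n d)⁻¹ = n * c := by
    simp only [trel, c]
    field_simp
  have hle : ∑ i, ∑ b ∈ univ.erase (x i), (coordSum g ^ 2) (Function.update x i b) ≤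
      (d : ℝ) * (n - 1) * F ^ 2 - 2 * n * F ^ 2 + d * (n - 1) :=
    hsum ▸ sum_le_sum fun i _ => sum_erase_coordSum_update_sq_le (by omega) hg hg1 x i
  rw [mulVec_P_apply, htrel]
  calc c * ∑ i, ∑ b ∈ univ.erase (x i), (coordSum g ^ 2) (Function.update x i b)
      ≤ c * ((d : ℝ) * (n - 1) * F ^ 2 - 2 * n * F ^ 2 + d * (n - 1)) :=
        mul_le_mul_of_nonneg_left hle hc.le
    _ = (1 - 2 * (n * c)) * F ^ 2 + 1 := by linear_combination (F ^ 2 + 1) * hcd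
    _ ≤ (1 - n * c) ^ 2 * F ^ 2 + 1 := by nlinarith [sq_nonneg (n * c * F)]

theorem pi_eq_uniform : pi n d = fun _ => 1 / (Fintype.card (State n d) : ℝ) := by
  ext; simp [pi]

theorem tv_le_dist (t : ℕ) (x : State n d) : tv ((P n d ^ t) x) (pi n d) ≤ dist n d t :=
  le_ciSup (f := fun x => tv ((P n d ^ t) x) (pi n d)) (Set.finite_range _).bddAbove x

theorem one_lt_trel (hn : 3 ≤ n) (hd : 2 ≤ d) : 1 < trel n d := by
  have hn' : (3 : ℝ) ≤ n := by exact_mod_cast hn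
  have hd' : (2 : ℝ) ≤ d := by exact_mod_cast hd
  rw [trel, one_lt_div (by positivity)]
  nlinarith

theorem one_sub_le_dist (hn : 3 ≤ n) (hd : 2 ≤ d) (t : ℕ) :
    1 - 8 / (trel n d * (1 - (trel n d)⁻¹) ^ (2 * t)) ≤ dist n d t := by
  have hn0 : (0 : ℝ) < n := by positivity
  set a : Fin n := ⟨0, by omega⟩
  set g : Fin n → ℝ := fun b => (if b = a then 1 else 0) - 1 / n
  have hg : ∑ b, g b = 0 := by simp [g, sum_sub_distrib, hn0.ne']
  have hg1 : ∀ b c, (g b - g c) ^ 2 ≤ 1 := fun b c => by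
    rw [show g b - g c = (if b = a then 1 else 0) - (if c = a then 1 else 0) by simp only [g]; ring]
    split_ifs <;> norm_num
  have hcorner : coordSum g (fun _ => a : State n d) = trel n d := by
    simp [coordSum, g, trel]
    field_simp
  set r := trel n d
  have hr := one_lt_trel hn hd
  have hr0 : 0 < r := zero_lt_one.trans hr
  have hc0 : 0 < 1 - r⁻¹ := sub_pos.2 (inv_lt_one_of_one_lt₀ hr)
  have hc1 : 1 - r⁻¹ < 1 := sub_lt_self 1 (inv_pos.2 hr0)
  have hwilson := one_sub_le_tv_pow_apply
    (P_mem_doublyStochastic (n := n) (d := d) (by omega) (by omega))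
    (mulVec_P_coordSum (by omega) (by omega) hg)
    (mulVec_P_coordSum_sq_le (by omega) (by omega) hg hg1) (by nlinarith) hr0.le
    (V := r) (by field_simp; nlinarith) t (fun _ => a) (by rw [hcorner]; positivity)
  rw [hcorner, ← pi_eq_uniform] at hwilson
  refine le_trans (le_of_eq ?_) (hwilson.trans (tv_le_dist t _))
  field_simp
  ring

theorem P_pos_of_hammingDist_eq_one (hn : 2 ≤ n) (hd : 1 ≤ d) {x y : State n d}
    (h : hammingDist x y = 1) : 0 < P n d x y := by
  have hn' : (2 : ℝ) ≤ n := by exact_mod_cast hn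
  have hd' : (1 : ℝ) ≤ d := by exact_mod_cast hd
  simp only [P, of_apply, h, if_true]
  exact one_div_pos.2 (by nlinarith)

theorem pow_apply_pos (hn : 3 ≤ n) (hd : 1 ≤ d) {k : ℕ} (hk : 2 ≤ k) {x y : State n d}
    (h : hammingDist x y ≤ k) : 0 < (P n d ^ k) x y := by
  have hP := P_mem_doublyStochastic (n := n) (d := d) (by omega) hd
  have : Nonempty (Fin d) := ⟨⟨0, by omega⟩⟩
  have : Nontrivial (Fin n) := Fin.nontrivial_iff_two_le.2 (by omega)
  have hadj := fun {x y : State n d} => P_pos_of_hammingDist_eq_one (x := x) (y := y) (by omega) hd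
  induction k, hk using Nat.le_induction generalizing x with
  | base =>
    obtain ⟨z, hxz, hzy⟩ := exists_hammingDist_eq_one_eq_one (by simpa using hn) h
    rw [sq]
    exact mul_apply_pos_of_nonneg (fun _ _ => nonneg_of_mem_doublyStochastic hP)
      (fun _ _ => nonneg_of_mem_doublyStochastic hP) (hadj hxz) (hadj hzy)
  | succ k hk ih =>
    obtain ⟨z, hxz, hzy⟩ := exists_hammingDist_eq_one_of_le_succ (by omega) h
    rw [pow_succ']
    exact mul_apply_pos_of_nonneg (fun _ _ => nonneg_of_mem_doublyStochastic hP)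
      (fun _ _ => nonneg_of_mem_doublyStochastic (pow_mem hP k)) (hadj hxz) (ih hzy)

theorem exists_dist_le (hn : 3 ≤ n) (hd : 1 ≤ d) {ε : ℝ} (hε : 0 < ε) : ∃ t, dist n d t ≤ ε := by
  have : Nonempty (State n d) := ⟨fun _ => ⟨0, by omega⟩⟩
  obtain ⟨t, ht⟩ := exists_tv_pow_le (P_mem_doublyStochastic (by omega) hd)
    (fun x y => pow_apply_pos hn hd (by omega : 2 ≤ d + 1)
      (hammingDist_le_card_fintype.trans (by simp))) hε
  exact ⟨t, ciSup_le fun x => pi_eq_uniform (n := n) ▸ ht x⟩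

theorem two_thirds_mul_le_trel (hn : 3 ≤ n) : 2 / 3 * (d : ℝ) ≤ trel n d := by
  have hn' : (3 : ℝ) ≤ n := by exact_mod_cast hn
  rw [trel, le_div_iff₀ (by positivity)]
  nlinarith [(Nat.cast_nonneg d : (0 : ℝ) ≤ d)]

end RW

theorem mul_log_le_of_one_sub_div_le {r ε : ℝ} {t : ℕ} (hr : 1 < r) (hε : ε < 1)
    (h : 1 - 8 / (r * (1 - r⁻¹) ^ (2 * t)) ≤ ε) : (r - 1) / 2 * Real.log (r * (1 - ε) / 8) ≤ t := by
  set c := 1 - r⁻¹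
  have hr0 : 0 < r := zero_lt_one.trans hr
  have hc : 0 < c := sub_pos.2 (inv_lt_one_of_one_lt₀ hr)
  have hct : 0 < r * c ^ (2 * t) := by positivity
  have hbound : r * (1 - ε) / 8 ≤ c⁻¹ ^ (2 * t) := by
    have : 1 - ε ≤ 8 / (r * c ^ (2 * t)) := by linarith
    rw [le_div_iff₀ hct] at this
    rw [inv_pow, div_le_iff₀ (by norm_num), ← div_le_iff₀' (by positivity)]
    field_simp
    nlinarith
  have hlogc : Real.log c⁻¹ ≤ 1 / (r - 1) := by
    have := Real.log_le_sub_one_of_pos (inv_pos.2 hc)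
    have hc' : c⁻¹ - 1 = 1 / (r - 1) := by
      have : r - 1 ≠ 0 := by linarith
      simp only [c]
      field_simp
      ring
    linarith
  have hlog : Real.log (r * (1 - ε) / 8) ≤ 2 * t * (1 / (r - 1)) := by
    calc Real.log (r * (1 - ε) / 8) ≤ Real.log (c⁻¹ ^ (2 * t)) :=
          Real.log_le_log (by nlinarith) hbound
      _ = 2 * t * Real.log c⁻¹ := by rw [Real.log_pow]; push_cast; ring
      _ ≤ 2 * t * (1 / (r - 1)) := by gcongr
  have hr1 : 0 < r - 1 := by linarith
  calc (r - 1) / 2 * Real.log (r * (1 - ε) / 8) ≤ (r - 1) / 2 * (2 * t * (1 / (r - 1))) := by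
        gcongr
    _ = t := by field_simp

theorem le_mul_log_of_two_thirds_mul_le {d r ε : ℝ} (hd : 1 ≤ d) (hr : 2 / 3 * d ≤ r) (hr1 : 1 ≤ r)
    (hε0 : 0 < ε) (hε1 : ε < 1) :
    r / 2 * Real.log d + (Real.log ((1 - ε) / 12) / 2 - 3 / 4) * r ≤
      (r - 1) / 2 * Real.log (r * (1 - ε) / 8) := by
  have hε : 0 < 1 - ε := by linarith
  set L := Real.log ((1 - ε) / 12)
  have hL : L ≤ 0 := Real.log_nonpos (by linarith) (by linarith)
  have hB : Real.log d + L ≤ Real.log (r * (1 - ε) / 8) := by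
    rw [← Real.log_mul (by positivity) (by positivity)]
    exact Real.log_le_log (by positivity) (by nlinarith)
  have hlogd : Real.log d ≤ d - 1 := Real.log_le_sub_one_of_pos (by linarith)
  nlinarith

/-- Cutoff lower bound: there is a constant `c_l(ε)` depending only on `ε` such that
`t_mix(ε) ≥ (d(n-1)/(2n))·log d + c_l(ε)·(d(n-1)/n)`. -/
theorem rook_walk_cutoff_lower :
    ∃ cl : ℝ → ℝ, ∀ n d : ℕ, 3 ≤ n → 2 ≤ d → ∀ ε : ℝ, 0 < ε → ε < 1 →
      ((d : ℝ) * ((n : ℝ) - 1) / (2 * (n : ℝ))) * Real.log (d : ℝ) +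
          cl ε * ((d : ℝ) * ((n : ℝ) - 1) / (n : ℝ)) ≤ (RW.tmix n d ε : ℝ) := by
  refine ⟨fun ε => Real.log ((1 - ε) / 12) / 2 - 3 / 4, fun n d hn hd ε hε0 hε1 => ?_⟩
  have hmix : RW.dist n d (RW.tmix n d ε) ≤ ε :=
    Nat.sInf_mem (RW.exists_dist_le hn (by omega) hε0)
  have hr := RW.one_lt_trel hn hd
  rw [show (d : ℝ) * (n - 1) / (2 * n) = RW.trel n d / 2 by rw [RW.trel]; ring]
  exact (le_mul_log_of_two_thirds_mul_le (by exact_mod_cast (by omega : 1 ≤ d))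
    (RW.two_thirds_mul_le_trel hn) hr.le hε0 hε1).trans
    (mul_log_le_of_one_sub_div_le hr hε1 ((RW.one_sub_le_dist hn hd _).trans hmix))
end
end
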